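/- arXiv:2303.00629 — 7 statements merged into one kernel-verified Lean document; each statement's English description precedes it below -/
import Mathlib

section
/- Let ℓ be an odd natural number with ℓ ≥ 3 and let m be a natural number. If m is even then g(ℓ,m) = g(ℓ−1,m), and if m is odd then g(ℓ,m) = g(ℓ−1,m−1). -/
/-- `ℓ` contains `m` to base 2: there exists `k` with `m < 2^k ≤ ℓ`, and every
binary digit of `m` is at most the corresponding binary digit of `ℓ`
(equivalently, the bitwise AND of `m` and `ℓ` equals `m`). -/
def ContainsBase2 (l m : ℕ) : Prop :=
  (∃ k, m < 2 ^ k ∧ 2 ^ k ≤ l) ∧ m &&& l = m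

-- `g ℓ m = 1` if `m ≥ 0` and `ℓ` contains `m` to base 2, and `g ℓ m = 0` otherwise.
open Classical in
noncomputable def g (l : ℕ) (m : ℤ) : ℤ :=
  if 0 ≤ m ∧ ContainsBase2 l m.toNat then 1 else 0

lemma land_eq_self_iff (m l : ℕ) :
    m &&& l = m ↔ ∀ i, m.testBit i = true → l.testBit i = true := by
  constructor
  · intro h i hi
    have := congrArg (Nat.testBit · i) h
    simp only [Nat.testBit_and, hi, Bool.true_and] at this
    exact this
  · intro h
    apply Nat.eq_of_testBit_eq
    intro i
    rw [Nat.testBit_and]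
    cases hm : m.testBit i
    · simp
    · simp [h i hm]

lemma contains_even (a b : ℕ) (ha : 1 ≤ a) :
    ContainsBase2 (2*a+1) (2*b) ↔ ContainsBase2 (2*a) (2*b) := by
  unfold ContainsBase2
  constructor
  · rintro ⟨⟨k, hk1, hk2⟩, hand⟩
    constructor
    · match k with
      | 0 => exact ⟨1, by omega, by omega⟩
      | j+1 =>
        refine ⟨j+1, hk1, ?_⟩
        have : 2^(j+1) = 2 * 2^j := by ring
        omega
    · rw [land_eq_self_iff] at hand ⊢
      intro i hi
      match i with
      | 0 => simp at hi
      | i+1 =>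
        have := hand (i+1) hi
        simp only [Nat.testBit_succ] at this ⊢
        have h1 : 2*a/2 = a := by omega
        have h2 : (2*a+1)/2 = a := by omega
        rw [h1]; rw [h2] at this; exact this
  · rintro ⟨⟨k, hk1, hk2⟩, hand⟩
    refine ⟨⟨k, hk1, by omega⟩, ?_⟩
    rw [land_eq_self_iff] at hand ⊢
    intro i hi
    match i with
    | 0 => simp at hi
    | i+1 =>
      have := hand (i+1) hi
      simp only [Nat.testBit_succ] at this ⊢
      have h1 : 2*a/2 = a := by omega
      have h2 : (2*a+1)/2 = a := by omega
      rw [h2]; rw [h1] at this; exact this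

lemma contains_odd (a b : ℕ) (ha : 1 ≤ a) :
    ContainsBase2 (2*a+1) (2*b+1) ↔ ContainsBase2 (2*a) (2*b) := by
  unfold ContainsBase2
  constructor
  · rintro ⟨⟨k, hk1, hk2⟩, hand⟩
    constructor
    · match k with
      | 0 => omega
      | j+1 =>
        have : 2^(j+1) = 2 * 2^j := by ring
        exact ⟨j+1, by omega, by omega⟩
    · rw [land_eq_self_iff] at hand ⊢
      intro i hi
      match i with
      | 0 => simp at hi
      | i+1 =>
        have hb : (2*b+1).testBit (i+1) = true := by
          simp only [Nat.testBit_succ] at hi ⊢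
          have : (2*b+1)/2 = 2*b/2 := by omega
          rw [this]; exact hi
        have := hand (i+1) hb
        simp only [Nat.testBit_succ] at this ⊢
        have h1 : 2*a/2 = a := by omega
        have h2 : (2*a+1)/2 = a := by omega
        rw [h1]; rw [h2] at this; exact this
  · rintro ⟨⟨k, hk1, hk2⟩, hand⟩
    constructor
    · match k with
      | 0 =>
        refine ⟨1, by omega, by omega⟩
      | j+1 =>
        have h2 : 2^(j+1) = 2 * 2^j := by ring
        exact ⟨j+1, by omega, by omega⟩
    · rw [land_eq_self_iff] at hand ⊢
      intro i hi
      match i with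
      | 0 => simp
      | i+1 =>
        have hb : (2*b).testBit (i+1) = true := by
          simp only [Nat.testBit_succ] at hi ⊢
          have : (2*b+1)/2 = 2*b/2 := by omega
          rw [← this]; exact hi
        have := hand (i+1) hb
        simp only [Nat.testBit_succ] at this ⊢
        have h1 : 2*a/2 = a := by omega
        have h2 : (2*a+1)/2 = a := by omega
        rw [h2]; rw [h1] at this; exact this

lemma g_congr {l l' : ℕ} {m m' : ℤ}
    (h : (0 ≤ m ∧ ContainsBase2 l m.toNat) ↔ (0 ≤ m' ∧ ContainsBase2 l' m'.toNat)) :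
    g l m = g l' m' := by
  classical
  unfold g
  exact if_congr h rfl rfl

theorem stmt_1 (l m : ℕ) (hl : Odd l) (hl3 : 3 ≤ l) :
    (Even m → g l m = g (l - 1) m) ∧
    (Odd m → g l m = g (l - 1) ((m : ℤ) - 1)) := by
  obtain ⟨a, ha⟩ := hl
  have ha1 : 1 ≤ a := by omega
  have hlval : l = 2*a+1 := by omega
  have hl1 : l - 1 = 2*a := by omega
  subst hlval
  constructor
  · rintro ⟨b, hb⟩
    have hm : m = 2*b := by omega
    subst hm
    rw [hl1]
    apply g_congr
    have ht : ((2*b : ℕ) : ℤ).toNat = 2*b := by omega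
    rw [ht]
    have h0 : (0 : ℤ) ≤ ((2*b : ℕ) : ℤ) := by positivity
    simp only [h0, true_and]
    exact contains_even a b ha1
  · rintro ⟨b, hb⟩
    have hm : m = 2*b+1 := by omega
    subst hm
    rw [hl1]
    apply g_congr
    have h1 : (((2*b+1 : ℕ) : ℤ)).toNat = 2*b+1 := by omega
    have h2 : (((2*b+1 : ℕ) : ℤ) - 1).toNat = 2*b := by push_cast; omega
    rw [h1, h2]
    have h3 : (0 : ℤ) ≤ ((2*b+1 : ℕ) : ℤ) := by positivity
    have h4 : (0 : ℤ) ≤ ((2*b+1 : ℕ) : ℤ) - 1 := by push_cast; omega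
    simp only [h3, h4, true_and]
    exact contains_odd a b ha1
end

section
/- Let ℓ be a natural number with ℓ ≡ 3 (mod 4) and ℓ ≥ 7, and let m be a natural number. Then g(ℓ,m) = g(ℓ−2,m−1) + g(ℓ−3,m) + g(ℓ−3,m−3), where the second arguments are interpreted as integers (so a term with negative second argument is 0). -/
lemma land_four (q a r s : ℕ) (hr : r < 4) (hs : s < 4) :
    (4*q + r) &&& (4*a + s) = 4*(q &&& a) + (r &&& s) := by
  have hrs : r &&& s < 4 := by interval_cases r <;> interval_cases s <;> decide
  apply Nat.eq_of_testBit_eq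
  intro i
  match i with
  | 0 =>
    rw [Nat.testBit_land, Nat.testBit_zero, Nat.testBit_zero, Nat.testBit_zero,
      show (4*q + r) % 2 = r % 2 by omega, show (4*a + s) % 2 = s % 2 by omega,
      show (4*(q &&& a) + (r &&& s)) % 2 = (r &&& s) % 2 by omega]
    interval_cases r <;> interval_cases s <;> decide
  | 1 =>
    rw [Nat.testBit_land, Nat.testBit_succ, Nat.testBit_succ, Nat.testBit_succ,
      show (4*q + r) / 2 = 2*q + r/2 by omega, show (4*a + s) / 2 = 2*a + s/2 by omega,
      show (4*(q &&& a) + (r &&& s)) / 2 = 2*(q &&& a) + (r &&& s)/2 by omega,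
      Nat.testBit_zero, Nat.testBit_zero, Nat.testBit_zero,
      show (2*q + r/2) % 2 = (r/2) % 2 by omega, show (2*a + s/2) % 2 = (s/2) % 2 by omega,
      show (2*(q &&& a) + (r &&& s)/2) % 2 = ((r &&& s)/2) % 2 by omega]
    interval_cases r <;> interval_cases s <;> decide
  | (i+2) =>
    rw [Nat.testBit_land, Nat.testBit_succ, Nat.testBit_succ, Nat.testBit_succ,
      Nat.testBit_succ, Nat.testBit_succ, Nat.testBit_succ,
      show (4*q + r) / 2 / 2 = q by omega, show (4*a + s) / 2 / 2 = a by omega,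
      show (4*(q &&& a) + (r &&& s)) / 2 / 2 = q &&& a by omega,
      Nat.testBit_land]

lemma g_neg (l' : ℕ) (x : ℤ) (h : x < 0) : g l' x = 0 := by
  rw [g, if_neg]
  rintro ⟨h0, -⟩
  omega

lemma g_eval (l' x T v : ℕ) (hr : (∃ k, x < 2^k ∧ 2^k ≤ l') ↔ x < T)
    (hv : x &&& l' = v) : g l' (x : ℤ) = if x < T ∧ v = x then 1 else 0 := by
  classical
  have h : (0 ≤ (x:ℤ) ∧ ContainsBase2 l' ((x:ℤ)).toNat) ↔ (x < T ∧ v = x) := by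
    rw [Int.toNat_natCast]
    unfold ContainsBase2
    rw [hr, hv]
    simp [Int.natCast_nonneg]
  rw [g, if_congr h rfl rfl]

theorem stmt_7 (l m : ℕ) (hl : l % 4 = 3) (hl7 : 7 ≤ l) :
    g l m = g (l - 2) ((m : ℤ) - 1) + g (l - 3) m + g (l - 3) ((m : ℤ) - 3) := by
  obtain ⟨a, ha1, rfl⟩ : ∃ a, 1 ≤ a ∧ l = 4*a + 3 := ⟨l/4, by omega, by omega⟩
  rw [show 4*a+3-2 = 4*a+1 by omega, show 4*a+3-3 = 4*a by omega]
  obtain ⟨K, hKK, hK1, hK2⟩ : ∃ K, 2 ≤ K ∧ 2^K ≤ 4*a+3 ∧ 4*a+3 < 2^(K+1) := by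
    refine ⟨Nat.log 2 (4*a+3), ?_, Nat.pow_log_le_self 2 (by omega),
      Nat.lt_pow_succ_log_self (by norm_num) _⟩
    by_contra h
    have : 2^(Nat.log 2 (4*a+3)+1) ≤ 2^2 := Nat.pow_le_pow_right (by norm_num) (by omega)
    have := Nat.lt_pow_succ_log_self (show 1 < 2 by norm_num) (4*a+3)
    omega
  have h4 : 2^K % 4 = 0 := by
    obtain ⟨j, rfl⟩ : ∃ j, K = j + 2 := ⟨K - 2, by omega⟩
    have : (2:ℕ)^(j+2) = 2^j * 4 := by ring
    rw [this, Nat.mul_mod_left]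
  have hT4 : 4 ≤ 2^K := by
    calc (4:ℕ) = 2^2 := rfl
    _ ≤ 2^K := Nat.pow_le_pow_right (by norm_num) hKK
  have hrange : ∀ l' x : ℕ, 4*a ≤ l' → l' ≤ 4*a+3 →
      ((∃ k, x < 2^k ∧ 2^k ≤ l') ↔ x < 2^K) := by
    intro l' x h5 h6
    constructor
    · rintro ⟨k, hk1, hk2⟩
      have hk3 : k ≤ K := by
        by_contra h
        have : 2^(K+1) ≤ 2^k := Nat.pow_le_pow_right (by norm_num) (by omega)
        omega
      exact lt_of_lt_of_le hk1 (Nat.pow_le_pow_right (by norm_num) hk3)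
    · intro h
      exact ⟨K, h, by omega⟩
  obtain ⟨q, r, hr, rfl⟩ : ∃ q r, r < 4 ∧ m = 4*q + r := ⟨m/4, m%4, by omega, by omega⟩
  interval_cases r
  · -- r = 0
    rcases Nat.eq_zero_or_pos q with rfl | hq
    · have E1 : g (4*a+3) ((4*0+0 : ℕ) : ℤ) =
          if 4*0+0 < 2^K ∧ 4*(0 &&& a) = 4*0+0 then 1 else 0 :=
        g_eval _ _ _ _ (hrange _ _ (by omega) (by omega))
          (by rw [land_four 0 a 0 3 (by norm_num) (by norm_num)]; norm_num)
      have E3 : g (4*a) ((4*0+0 : ℕ) : ℤ) =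
          if 4*0+0 < 2^K ∧ 4*(0 &&& a) = 4*0+0 then 1 else 0 :=
        g_eval _ _ _ _ (hrange _ _ (by omega) (by omega))
          (by rw [show 4*a = 4*a+0 by omega, land_four 0 a 0 0 (by norm_num) (by norm_num)]; norm_num)
      rw [show ((4*0+0:ℕ):ℤ) - 1 = (-1 : ℤ) by norm_num,
        show ((4*0+0:ℕ):ℤ) - 3 = (-3 : ℤ) by norm_num,
        g_neg (4*a+1) (-1) (by norm_num), g_neg (4*a) (-3) (by norm_num), E1, E3]
      split_ifs <;> omega
    · have E1 : g (4*a+3) ((4*q+0 : ℕ) : ℤ) =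
          if 4*q+0 < 2^K ∧ 4*(q &&& a) = 4*q+0 then 1 else 0 :=
        g_eval _ _ _ _ (hrange _ _ (by omega) (by omega))
          (by rw [land_four q a 0 3 (by norm_num) (by norm_num)]; norm_num)
      have E2 : g (4*a+1) ((4*(q-1)+3 : ℕ) : ℤ) =
          if 4*(q-1)+3 < 2^K ∧ 4*((q-1) &&& a) + 1 = 4*(q-1)+3 then 1 else 0 :=
        g_eval _ _ _ _ (hrange _ _ (by omega) (by omega))
          (by rw [land_four (q-1) a 3 1 (by norm_num) (by norm_num)]; norm_num)
      have E3 : g (4*a) ((4*q+0 : ℕ) : ℤ) =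
          if 4*q+0 < 2^K ∧ 4*(q &&& a) = 4*q+0 then 1 else 0 :=
        g_eval _ _ _ _ (hrange _ _ (by omega) (by omega))
          (by rw [show 4*a = 4*a+0 by omega, land_four q a 0 0 (by norm_num) (by norm_num)]; norm_num)
      have E4 : g (4*a) ((4*(q-1)+1 : ℕ) : ℤ) =
          if 4*(q-1)+1 < 2^K ∧ 4*((q-1) &&& a) = 4*(q-1)+1 then 1 else 0 :=
        g_eval _ _ _ _ (hrange _ _ (by omega) (by omega))
          (by rw [show 4*a = 4*a+0 by omega, land_four (q-1) a 1 0 (by norm_num) (by norm_num)]; norm_num)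
      rw [show ((4*q+0:ℕ):ℤ) - 1 = ((4*(q-1)+3 : ℕ) : ℤ) by omega,
        show ((4*q+0:ℕ):ℤ) - 3 = ((4*(q-1)+1 : ℕ) : ℤ) by omega, E1, E2, E3, E4]
      split_ifs <;> omega
  · -- r = 1
    rcases Nat.eq_zero_or_pos q with rfl | hq
    · have E1 : g (4*a+3) ((4*0+1 : ℕ) : ℤ) =
          if 4*0+1 < 2^K ∧ 4*(0 &&& a) + 1 = 4*0+1 then 1 else 0 :=
        g_eval _ _ _ _ (hrange _ _ (by omega) (by omega))
          (by rw [land_four 0 a 1 3 (by norm_num) (by norm_num)]; norm_num)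
      have E2 : g (4*a+1) ((4*0+0 : ℕ) : ℤ) =
          if 4*0+0 < 2^K ∧ 4*(0 &&& a) = 4*0+0 then 1 else 0 :=
        g_eval _ _ _ _ (hrange _ _ (by omega) (by omega))
          (by rw [land_four 0 a 0 1 (by norm_num) (by norm_num)]; norm_num)
      have E3 : g (4*a) ((4*0+1 : ℕ) : ℤ) =
          if 4*0+1 < 2^K ∧ 4*(0 &&& a) = 4*0+1 then 1 else 0 :=
        g_eval _ _ _ _ (hrange _ _ (by omega) (by omega))
          (by rw [show 4*a = 4*a+0 by omega, land_four 0 a 1 0 (by norm_num) (by norm_num)]; norm_num)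
      rw [show ((4*0+1:ℕ):ℤ) - 1 = ((4*0+0 : ℕ) : ℤ) by norm_num,
        show ((4*0+1:ℕ):ℤ) - 3 = (-2 : ℤ) by norm_num,
        g_neg (4*a) (-2) (by norm_num), E1, E2, E3]
      split_ifs <;> omega
    · have E1 : g (4*a+3) ((4*q+1 : ℕ) : ℤ) =
          if 4*q+1 < 2^K ∧ 4*(q &&& a) + 1 = 4*q+1 then 1 else 0 :=
        g_eval _ _ _ _ (hrange _ _ (by omega) (by omega))
          (by rw [land_four q a 1 3 (by norm_num) (by norm_num)]; norm_num)
      have E2 : g (4*a+1) ((4*q+0 : ℕ) : ℤ) =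
          if 4*q+0 < 2^K ∧ 4*(q &&& a) = 4*q+0 then 1 else 0 :=
        g_eval _ _ _ _ (hrange _ _ (by omega) (by omega))
          (by rw [land_four q a 0 1 (by norm_num) (by norm_num)]; norm_num)
      have E3 : g (4*a) ((4*q+1 : ℕ) : ℤ) =
          if 4*q+1 < 2^K ∧ 4*(q &&& a) = 4*q+1 then 1 else 0 :=
        g_eval _ _ _ _ (hrange _ _ (by omega) (by omega))
          (by rw [show 4*a = 4*a+0 by omega, land_four q a 1 0 (by norm_num) (by norm_num)]; norm_num)
      have E4 : g (4*a) ((4*(q-1)+2 : ℕ) : ℤ) =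
          if 4*(q-1)+2 < 2^K ∧ 4*((q-1) &&& a) = 4*(q-1)+2 then 1 else 0 :=
        g_eval _ _ _ _ (hrange _ _ (by omega) (by omega))
          (by rw [show 4*a = 4*a+0 by omega, land_four (q-1) a 2 0 (by norm_num) (by norm_num)]; norm_num)
      rw [show ((4*q+1:ℕ):ℤ) - 1 = ((4*q+0 : ℕ) : ℤ) by omega,
        show ((4*q+1:ℕ):ℤ) - 3 = ((4*(q-1)+2 : ℕ) : ℤ) by omega, E1, E2, E3, E4]
      split_ifs <;> omega
  · -- r = 2
    rcases Nat.eq_zero_or_pos q with rfl | hq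
    · have E1 : g (4*a+3) ((4*0+2 : ℕ) : ℤ) =
          if 4*0+2 < 2^K ∧ 4*(0 &&& a) + 2 = 4*0+2 then 1 else 0 :=
        g_eval _ _ _ _ (hrange _ _ (by omega) (by omega))
          (by rw [land_four 0 a 2 3 (by norm_num) (by norm_num), show 2 &&& 3 = 2 from by decide])
      have E2 : g (4*a+1) ((4*0+1 : ℕ) : ℤ) =
          if 4*0+1 < 2^K ∧ 4*(0 &&& a) + 1 = 4*0+1 then 1 else 0 :=
        g_eval _ _ _ _ (hrange _ _ (by omega) (by omega))
          (by rw [land_four 0 a 1 1 (by norm_num) (by norm_num)]; norm_num)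
      have E3 : g (4*a) ((4*0+2 : ℕ) : ℤ) =
          if 4*0+2 < 2^K ∧ 4*(0 &&& a) = 4*0+2 then 1 else 0 :=
        g_eval _ _ _ _ (hrange _ _ (by omega) (by omega))
          (by rw [show 4*a = 4*a+0 by omega, land_four 0 a 2 0 (by norm_num) (by norm_num)]; norm_num)
      rw [show ((4*0+2:ℕ):ℤ) - 1 = ((4*0+1 : ℕ) : ℤ) by norm_num,
        show ((4*0+2:ℕ):ℤ) - 3 = (-1 : ℤ) by norm_num,
        g_neg (4*a) (-1) (by norm_num), E1, E2, E3]
      split_ifs <;> omega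
    · have E1 : g (4*a+3) ((4*q+2 : ℕ) : ℤ) =
          if 4*q+2 < 2^K ∧ 4*(q &&& a) + 2 = 4*q+2 then 1 else 0 :=
        g_eval _ _ _ _ (hrange _ _ (by omega) (by omega))
          (by rw [land_four q a 2 3 (by norm_num) (by norm_num), show 2 &&& 3 = 2 from by decide])
      have E2 : g (4*a+1) ((4*q+1 : ℕ) : ℤ) =
          if 4*q+1 < 2^K ∧ 4*(q &&& a) + 1 = 4*q+1 then 1 else 0 :=
        g_eval _ _ _ _ (hrange _ _ (by omega) (by omega))
          (by rw [land_four q a 1 1 (by norm_num) (by norm_num)]; norm_num)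
      have E3 : g (4*a) ((4*q+2 : ℕ) : ℤ) =
          if 4*q+2 < 2^K ∧ 4*(q &&& a) = 4*q+2 then 1 else 0 :=
        g_eval _ _ _ _ (hrange _ _ (by omega) (by omega))
          (by rw [show 4*a = 4*a+0 by omega, land_four q a 2 0 (by norm_num) (by norm_num)]; norm_num)
      have E4 : g (4*a) ((4*(q-1)+3 : ℕ) : ℤ) =
          if 4*(q-1)+3 < 2^K ∧ 4*((q-1) &&& a) = 4*(q-1)+3 then 1 else 0 :=
        g_eval _ _ _ _ (hrange _ _ (by omega) (by omega))
          (by rw [show 4*a = 4*a+0 by omega, land_four (q-1) a 3 0 (by norm_num) (by norm_num)]; norm_num)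
      rw [show ((4*q+2:ℕ):ℤ) - 1 = ((4*q+1 : ℕ) : ℤ) by omega,
        show ((4*q+2:ℕ):ℤ) - 3 = ((4*(q-1)+3 : ℕ) : ℤ) by omega, E1, E2, E3, E4]
      split_ifs <;> omega
  · -- r = 3
    have E1 : g (4*a+3) ((4*q+3 : ℕ) : ℤ) =
        if 4*q+3 < 2^K ∧ 4*(q &&& a) + 3 = 4*q+3 then 1 else 0 :=
      g_eval _ _ _ _ (hrange _ _ (by omega) (by omega))
        (by rw [land_four q a 3 3 (by norm_num) (by norm_num)]; norm_num)
    have E2 : g (4*a+1) ((4*q+2 : ℕ) : ℤ) =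
        if 4*q+2 < 2^K ∧ 4*(q &&& a) = 4*q+2 then 1 else 0 :=
      g_eval _ _ _ _ (hrange _ _ (by omega) (by omega))
        (by rw [land_four q a 2 1 (by norm_num) (by norm_num)]; norm_num)
    have E3 : g (4*a) ((4*q+3 : ℕ) : ℤ) =
        if 4*q+3 < 2^K ∧ 4*(q &&& a) = 4*q+3 then 1 else 0 :=
      g_eval _ _ _ _ (hrange _ _ (by omega) (by omega))
        (by rw [show 4*a = 4*a+0 by omega, land_four q a 3 0 (by norm_num) (by norm_num)]; norm_num)
    have E4 : g (4*a) ((4*q+0 : ℕ) : ℤ) =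
        if 4*q+0 < 2^K ∧ 4*(q &&& a) = 4*q+0 then 1 else 0 :=
      g_eval _ _ _ _ (hrange _ _ (by omega) (by omega))
        (by rw [show 4*a = 4*a+0 by omega, land_four q a 0 0 (by norm_num) (by norm_num)]; norm_num)
    rw [show ((4*q+3:ℕ):ℤ) - 1 = ((4*q+2 : ℕ) : ℤ) by omega,
      show ((4*q+3:ℕ):ℤ) - 3 = ((4*q+0 : ℕ) : ℤ) by omega, E1, E2, E3, E4]
    split_ifs <;> omega
end

section
/- Let ℓ be a natural number with ℓ ≡ 0 (mod 4) and ℓ ≥ 8, and let m be a natural number. If m is even then g(ℓ−3,m) + g(ℓ−3,m−3) = g(ℓ−4,m) + g(ℓ−4,m−4), and if m is odd then g(ℓ−3,m) + g(ℓ−3,m−3) = g(ℓ−4,m−1) + g(ℓ−4,m−3); here the second arguments are interpreted as integers (so a term with negative second argument is 0). -/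
open Classical in
lemma g_congr_s8 {L L' : ℕ} {n n' : ℤ}
    (h : (0 ≤ n ∧ ContainsBase2 L n.toNat) ↔ (0 ≤ n' ∧ ContainsBase2 L' n'.toNat)) :
    g L n = g L' n' := by
  unfold g; exact if_congr h rfl rfl

open Classical in
lemma g_eq_zero {L : ℕ} {n : ℤ} (h : ¬ (0 ≤ n ∧ ContainsBase2 L n.toNat)) :
    g L n = 0 := by
  unfold g; exact if_neg h

lemma and4 (a b r s : ℕ) (hr : r < 4) (hs : s < 4) :
    (4*a+r) &&& (4*b+s) = 4*(a &&& b) + (r &&& s) := by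
  have hrs : r &&& s < 4 := lt_of_le_of_lt Nat.and_le_left hr
  apply Nat.eq_of_testBit_eq
  intro j
  have h4 : (4:ℕ) = 2^2 := rfl
  rw [Nat.testBit_and, h4,
    Nat.testBit_two_pow_mul_add a (by omega : r < 2^2),
    Nat.testBit_two_pow_mul_add b (by omega : s < 2^2),
    Nat.testBit_two_pow_mul_add (a &&& b) (by omega : r &&& s < 2^2)]
  by_cases h : j < 2 <;> simp [h, Nat.testBit_and]

lemma C_decomp (b s a r : ℕ) (hs : s < 4) (hr : r < 4) :
    ContainsBase2 (4*b+s) (4*a+r) ↔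
      (∃ k, 4*a+r < 2^k ∧ 2^k ≤ 4*b+s) ∧ (a &&& b = a ∧ r &&& s = r) := by
  unfold ContainsBase2
  refine and_congr Iff.rfl ?_
  rw [and4 a b r s hr hs]
  have hy : r &&& s ≤ r := Nat.and_le_left
  have key : ∀ x y : ℕ, y ≤ r → (4*x+y = 4*a+r ↔ x = a ∧ y = r) := by
    intro x y hy; omega
  exact key _ _ hy

lemma pow_two_eq (k e : ℕ) (h : 2^k = 4*e+1) : e = 0 := by
  match k with
  | 0 => omega
  | k+1 => rw [pow_succ] at h; omega

lemma exA (d n : ℕ) (hd : 1 ≤ d) :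
    (∃ k, n < 2^k ∧ 2^k ≤ 4*d+1) ↔ (∃ k, n < 2^k ∧ 2^k ≤ 4*d) := by
  constructor
  · rintro ⟨k, h1, h2⟩
    refine ⟨k, h1, ?_⟩
    by_contra h
    have h3 : 2^k = 4*d+1 := by omega
    have := pow_two_eq k d h3; omega
  · rintro ⟨k, h1, h2⟩; exact ⟨k, h1, by omega⟩

lemma exB (d e : ℕ) (hd : 1 ≤ d) :
    (∃ k, 4*e+1 < 2^k ∧ 2^k ≤ 4*d+1) ↔ (∃ k, 4*e < 2^k ∧ 2^k ≤ 4*d) := by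
  rw [exA _ _ hd]
  constructor
  · rintro ⟨k, h1, h2⟩; exact ⟨k, by omega, h2⟩
  · rintro ⟨k, h1, h2⟩
    by_cases he : e = 0
    · exact ⟨1, by omega, by omega⟩
    · have hne : 2^k ≠ 4*e+1 := fun h => he (pow_two_eq k e h)
      exact ⟨k, by omega, h2⟩

/-- For `r ∈ {0,2}`. -/
lemma main0 (d a r : ℕ) (hd : 1 ≤ d) (hr : r = 0 ∨ r = 2) :
    ContainsBase2 (4*d+1) (4*a+r) ↔ ContainsBase2 (4*d) (4*a+r) := by
  have h0 : (4*d : ℕ) = 4*d+0 := by omega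
  rw [h0, C_decomp d 1 a r (by omega) (by omega), C_decomp d 0 a r (by omega) (by omega)]
  refine and_congr (exA _ _ hd) (and_congr Iff.rfl ?_)
  rcases hr with rfl | rfl <;> simp

lemma main1 (d a : ℕ) (hd : 1 ≤ d) :
    ContainsBase2 (4*d+1) (4*a+1) ↔ ContainsBase2 (4*d) (4*a) := by
  have h0 : (4*d : ℕ) = 4*d+0 := by omega
  have h0' : (4*a : ℕ) = 4*a+0 := by omega
  rw [h0, h0', C_decomp d 1 a 1 (by omega) (by omega), C_decomp d 0 a 0 (by omega) (by omega)]
  refine and_congr (exB d a hd) (and_congr Iff.rfl ?_)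
  simp

lemma Cfalse2 (b s a : ℕ) (hs : s = 0 ∨ s = 1) : ¬ ContainsBase2 (4*b+s) (4*a+2) := by
  rw [C_decomp b s a 2 (by omega) (by omega)]
  rintro ⟨-, -, h⟩
  rcases hs with rfl | rfl <;> simp at h

lemma Cfalse3 (b a : ℕ) : ¬ ContainsBase2 (4*b+1) (4*a+3) := by
  rw [C_decomp b 1 a 3 (by omega) (by omega)]
  rintro ⟨-, -, h⟩
  simp at h

theorem stmt_8 (l m : ℕ) (hl : l % 4 = 0) (hl8 : 8 ≤ l) :
    (Even m → g (l - 3) m + g (l - 3) ((m : ℤ) - 3)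
      = g (l - 4) m + g (l - 4) ((m : ℤ) - 4)) ∧
    (Odd m → g (l - 3) m + g (l - 3) ((m : ℤ) - 3)
      = g (l - 4) ((m : ℤ) - 1) + g (l - 4) ((m : ℤ) - 3)) := by
  obtain ⟨d, hd, rfl⟩ : ∃ d, 1 ≤ d ∧ l = 4*d+4 := ⟨l/4 - 1, by omega, by omega⟩
  have h3 : 4*d+4 - 3 = 4*d+1 := by omega
  have h4 : 4*d+4 - 4 = 4*d := by omega
  rw [h3, h4]
  set a := m / 4 with ha
  set r := m % 4 with hrr
  have hm : 4*a + r = m := Nat.div_add_mod m 4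
  constructor
  · intro hpar
    have hr2 : m % 2 = 0 := Nat.even_iff.mp hpar
    have hr : r = 0 ∨ r = 2 := by omega
    have e1 : g (4*d+1) (m : ℤ) = g (4*d) (m : ℤ) := by
      apply g_congr_s8
      have ht : ((m : ℤ)).toNat = 4*a+r := by omega
      rw [ht]
      exact and_congr Iff.rfl (main0 d a r hd hr)
    rw [e1]
    by_cases hm4 : 4 ≤ m
    · rcases hr with hr0 | hr2'
      · -- m = 4a, a ≥ 1
        have haa : 1 ≤ a := by omega
        have e2 : g (4*d+1) ((m : ℤ) - 3) = g (4*d) ((m : ℤ) - 4) := by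
          apply g_congr_s8
          have ht1 : ((m : ℤ) - 3).toNat = 4*(a-1)+1 := by omega
          have ht2 : ((m : ℤ) - 4).toNat = 4*(a-1) := by omega
          rw [ht1, ht2]
          constructor
          · rintro ⟨-, h⟩; exact ⟨by omega, (main1 d (a-1) hd).mp h⟩
          · rintro ⟨-, h⟩; exact ⟨by omega, (main1 d (a-1) hd).mpr h⟩
        rw [e2]
      · -- m = 4a+2, a ≥ 1
        have haa : 1 ≤ a := by omega
        have e2 : g (4*d+1) ((m : ℤ) - 3) = 0 := by
          apply g_eq_zero
          rintro ⟨-, h⟩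
          have ht1 : ((m : ℤ) - 3).toNat = 4*(a-1)+3 := by omega
          rw [ht1] at h
          exact Cfalse3 d (a-1) h
        have e3 : g (4*d) ((m : ℤ) - 4) = 0 := by
          apply g_eq_zero
          rintro ⟨-, h⟩
          have ht2 : ((m : ℤ) - 4).toNat = 4*(a-1)+2 := by omega
          rw [ht2] at h
          have h0 : (4*d : ℕ) = 4*d+0 := by omega
          rw [h0] at h
          exact Cfalse2 d 0 (a-1) (Or.inl rfl) h
        rw [e2, e3]
    · -- m ∈ {0, 2} : both subtracted terms negative
      have e2 : g (4*d+1) ((m : ℤ) - 3) = 0 := g_eq_zero (by omega)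
      have e3 : g (4*d) ((m : ℤ) - 4) = 0 := g_eq_zero (by omega)
      rw [e2, e3]
  · intro hpar
    have hr2 : m % 2 = 1 := Nat.odd_iff.mp hpar
    have hr : r = 1 ∨ r = 3 := by omega
    rcases hr with hr1 | hr3
    · -- m = 4a+1
      have e1 : g (4*d+1) (m : ℤ) = g (4*d) ((m : ℤ) - 1) := by
        apply g_congr_s8
        have ht : ((m : ℤ)).toNat = 4*a+1 := by omega
        have ht1 : ((m : ℤ) - 1).toNat = 4*a := by omega
        rw [ht, ht1]
        constructor
        · rintro ⟨-, h⟩; exact ⟨by omega, (main1 d a hd).mp h⟩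
        · rintro ⟨-, h⟩; exact ⟨by omega, (main1 d a hd).mpr h⟩
      have e2 : g (4*d+1) ((m : ℤ) - 3) = 0 := by
        apply g_eq_zero
        rintro ⟨h0, h⟩
        have haa : 1 ≤ a := by omega
        have ht1 : ((m : ℤ) - 3).toNat = 4*(a-1)+2 := by omega
        rw [ht1] at h
        exact Cfalse2 d 1 (a-1) (Or.inr rfl) h
      have e3 : g (4*d) ((m : ℤ) - 3) = 0 := by
        apply g_eq_zero
        rintro ⟨h0, h⟩
        have haa : 1 ≤ a := by omega
        have ht1 : ((m : ℤ) - 3).toNat = 4*(a-1)+2 := by omega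
        rw [ht1] at h
        have h0' : (4*d : ℕ) = 4*d+0 := by omega
        rw [h0'] at h
        exact Cfalse2 d 0 (a-1) (Or.inl rfl) h
      rw [e1, e2, e3]
    · -- m = 4a+3
      have e1 : g (4*d+1) (m : ℤ) = 0 := by
        apply g_eq_zero
        rintro ⟨-, h⟩
        have ht : ((m : ℤ)).toNat = 4*a+3 := by omega
        rw [ht] at h
        exact Cfalse3 d a h
      have e2 : g (4*d+1) ((m : ℤ) - 3) = g (4*d) ((m : ℤ) - 3) := by
        apply g_congr_s8
        have ht : ((m : ℤ) - 3).toNat = 4*a+0 := by omega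
        rw [ht]
        exact and_congr Iff.rfl (main0 d a 0 hd (Or.inl rfl))
      have e3 : g (4*d) ((m : ℤ) - 1) = 0 := by
        apply g_eq_zero
        rintro ⟨-, h⟩
        have ht : ((m : ℤ) - 1).toNat = 4*a+2 := by omega
        rw [ht] at h
        have h0' : (4*d : ℕ) = 4*d+0 := by omega
        rw [h0'] at h
        exact Cfalse2 d 0 a (Or.inl rfl) h
      rw [e1, e2, e3]
end

section
/- Let k and ℓ be natural numbers with k ≥ 1 and ℓ ≥ 1, and suppose that ν₂(ℓ) ≥ ν₂(k) or that k−1 does not contain ℓ−1 to base 2. Then g(k,ℓ) = g(k−1,ℓ) + g(k−1,ℓ−1). -/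
namespace StmtAux

lemma sub_iff {m a : ℕ} : m &&& a = m ↔ ∀ i, m.testBit i = true → a.testBit i = true := by
  constructor
  · intro h i hi
    have h2 : (m &&& a).testBit i = m.testBit i := by rw [h]
    rw [Nat.testBit_and, hi] at h2
    simpa using h2.symm
  · intro h
    apply Nat.eq_of_testBit_eq
    intro i
    rw [Nat.testBit_and]
    cases hm : m.testBit i
    · simp
    · simp [h i hm]

lemma lt_size_of_testBit {n i : ℕ} (h : n.testBit i = true) : i < n.size :=
  Nat.lt_size.mpr (Nat.ge_two_pow_of_testBit h)

lemma top_testBit {n : ℕ} (hn : n ≠ 0) : n.testBit (n.size - 1) = true := by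
  have h1 : 0 < n.size := Nat.size_pos.mpr (Nat.pos_of_ne_zero hn)
  have h2 : 2 ^ (n.size - 1) ≤ n := Nat.lt_size.mp (by omega)
  have h3 : n < 2 ^ n.size := Nat.lt_size_self n
  rw [Nat.testBit_eq_decide_div_mod_eq]
  have h4 : n / 2 ^ (n.size - 1) = 1 := by
    apply Nat.div_eq_of_lt_le (by simpa using h2)
    have : n.size = n.size - 1 + 1 := by omega
    rw [this, pow_succ] at h3
    omega
  simp [h4]

lemma size_two_pow_sub_one (m : ℕ) : (2 ^ m - 1).size = m := by
  apply le_antisymm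
  · exact Nat.size_le.mpr (by have := Nat.one_le_two_pow (n := m); omega)
  · rcases Nat.eq_zero_or_pos m with rfl | hm
    · simp
    · have : m - 1 < (2 ^ m - 1).size := by
        apply Nat.lt_size.mpr
        have h1 : 2 ^ (m - 1) * 2 = 2 ^ m := by
          rw [← pow_succ]; congr 1; omega
        have := Nat.one_le_two_pow (n := m - 1)
        omega
      omega

lemma contains_iff {a m : ℕ} :
    ContainsBase2 a m ↔
      (∀ i, m.testBit i = true → a.testBit i = true) ∧ m.size < a.size := by
  unfold ContainsBase2
  rw [sub_iff]
  constructor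
  · rintro ⟨⟨j, h1, h2⟩, hs⟩
    refine ⟨hs, Nat.lt_size.mpr ?_⟩
    exact le_trans (Nat.pow_le_pow_right (by norm_num) (Nat.size_le.mpr h1)) h2
  · rintro ⟨hs, hsz⟩
    exact ⟨⟨m.size, Nat.lt_size_self m, Nat.lt_size.mp hsz⟩, hs⟩

lemma decomp {n : ℕ} (hn : n ≠ 0) :
    ∃ q, n = 2 ^ (padicValNat 2 n + 1) * q + 2 ^ (padicValNat 2 n) := by
  set ν := padicValNat 2 n with hν
  have hd : 2 ^ ν ∣ n := pow_padicValNat_dvd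
  have hnd : ¬ 2 ^ (ν + 1) ∣ n := pow_succ_padicValNat_not_dvd hn
  obtain ⟨o, ho⟩ := hd
  have hodd : o % 2 = 1 := by
    rcases Nat.mod_two_eq_zero_or_one o with h | h
    · exfalso; apply hnd
      refine ⟨o / 2, ?_⟩
      rw [ho, pow_succ]
      nth_rewrite 1 [show o = 2 * (o / 2) by omega]
      ring
    · exact h
  refine ⟨o / 2, ?_⟩
  have h2 : o = 2 * (o / 2) + 1 := by omega
  rw [ho]
  nth_rewrite 1 [h2]
  rw [pow_succ]; ring

lemma testBit_low {ν q s i : ℕ} (hs : s < 2 ^ (ν + 1)) (hi : i ≤ ν) :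
    (2 ^ (ν + 1) * q + s).testBit i = s.testBit i := by
  have h1 : (2 ^ (ν + 1) * q + s) % 2 ^ (ν + 1) = s % 2 ^ (ν + 1) := by
    simp [Nat.add_mod, Nat.mul_mod_right]
  have h2 := Nat.testBit_mod_two_pow (2 ^ (ν + 1) * q + s) (ν + 1) i
  rw [h1, Nat.mod_eq_of_lt hs] at h2
  rw [h2]; simp [Nat.lt_succ_of_le hi]

lemma div_high {ν q s : ℕ} (hs : s < 2 ^ (ν + 1)) :
    (2 ^ (ν + 1) * q + s) / 2 ^ (ν + 1) = q := by
  rw [Nat.mul_add_div (Nat.two_pow_pos _), Nat.div_eq_of_lt hs]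
  ring

lemma testBit_high {ν q s s' i : ℕ} (hs : s < 2 ^ (ν + 1)) (hs' : s' < 2 ^ (ν + 1))
    (hi : ν < i) :
    (2 ^ (ν + 1) * q + s).testBit i = (2 ^ (ν + 1) * q + s').testBit i := by
  have hkey : ∀ t, t < 2 ^ (ν + 1) → (2 ^ (ν + 1) * q + t) / 2 ^ i = q / 2 ^ (i - (ν + 1)) := by
    intro t ht
    have : 2 ^ i = 2 ^ (ν + 1) * 2 ^ (i - (ν + 1)) := by
      rw [← pow_add]; congr 1; omega
    rw [this, ← Nat.div_div_eq_div_mul, div_high ht]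
  rw [Nat.testBit_eq_decide_div_mod_eq, Nat.testBit_eq_decide_div_mod_eq, hkey s hs, hkey s' hs']

private lemma hpow {ν : ℕ} : 2 ^ ν < 2 ^ (ν + 1) := by
  rw [pow_succ]; have := Nat.two_pow_pos ν; omega

private lemma hpow' {ν : ℕ} : 2 ^ ν - 1 < 2 ^ (ν + 1) := by
  have := Nat.two_pow_pos ν; have := @hpow ν; omega

section
variable {n : ℕ} (hn : n ≠ 0)
include hn

lemma bit_self_nu : n.testBit (padicValNat 2 n) = true := by
  obtain ⟨q, hq⟩ := decomp hn
  set ν := padicValNat 2 n with hν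
  rw [hq, testBit_low hpow le_rfl, Nat.testBit_two_pow]
  simp

lemma bit_self_lt {i : ℕ} (hi : i < padicValNat 2 n) : n.testBit i = false := by
  obtain ⟨q, hq⟩ := decomp hn
  set ν := padicValNat 2 n with hν
  rw [hq, testBit_low hpow (le_of_lt hi), Nat.testBit_two_pow]
  simp; omega

lemma pred_decomp : ∃ q, n = 2 ^ (padicValNat 2 n + 1) * q + 2 ^ (padicValNat 2 n)
    ∧ n - 1 = 2 ^ (padicValNat 2 n + 1) * q + (2 ^ (padicValNat 2 n) - 1) := by
  obtain ⟨q, hq⟩ := decomp hn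
  exact ⟨q, hq, by have := Nat.two_pow_pos (padicValNat 2 n); omega⟩

lemma bit_pred_lt {i : ℕ} (hi : i < padicValNat 2 n) : (n - 1).testBit i = true := by
  obtain ⟨q, hq, hq2⟩ := pred_decomp hn
  set ν := padicValNat 2 n with hν
  rw [hq2, testBit_low hpow' (le_of_lt hi)]
  simp [hi]

lemma bit_pred_nu : (n - 1).testBit (padicValNat 2 n) = false := by
  obtain ⟨q, hq, hq2⟩ := pred_decomp hn
  set ν := padicValNat 2 n with hν
  rw [hq2, testBit_low hpow' le_rfl]
  simp

lemma bit_pred_gt {i : ℕ} (hi : padicValNat 2 n < i) : (n - 1).testBit i = n.testBit i := by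
  obtain ⟨q, hq, hq2⟩ := pred_decomp hn
  set ν := padicValNat 2 n with hν
  rw [hq2]
  conv_rhs => rw [hq]
  exact testBit_high hpow' hpow hi

lemma eq_pow_of_size (h : n.size = padicValNat 2 n + 1) :
    n = 2 ^ (padicValNat 2 n) := by
  obtain ⟨q, hq⟩ := decomp hn
  have hlt : n < 2 ^ (padicValNat 2 n + 1) := by rw [← h]; exact Nat.lt_size_self n
  rcases Nat.eq_zero_or_pos q with rfl | hq0
  · simpa using hq
  · exfalso
    have : 2 ^ (padicValNat 2 n + 1) ≤ 2 ^ (padicValNat 2 n + 1) * q :=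
      Nat.le_mul_of_pos_right _ hq0
    omega

lemma size_pred_eq (h2 : n ≠ 2 ^ (padicValNat 2 n)) :
    (n - 1).size = n.size := by
  apply le_antisymm (Nat.size_le_size (by omega))
  have hρ : padicValNat 2 n < n.size := lt_size_of_testBit (bit_self_nu hn)
  have htop := top_testBit hn
  have ht : padicValNat 2 n < n.size - 1 := by
    by_contra hc
    push_neg at hc
    have hsz : n.size = padicValNat 2 n + 1 := by omega
    exact h2 (eq_pow_of_size hn hsz)
  have hb : (n - 1).testBit (n.size - 1) = true := by
    rw [bit_pred_gt hn ht]; exact htop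
  have := lt_size_of_testBit hb
  omega

end

end StmtAux

open StmtAux in
theorem stmt_9 (k l : ℕ) (hk : 1 ≤ k) (hl : 1 ≤ l)
    (h : padicValNat 2 l ≥ padicValNat 2 k ∨ ¬ ContainsBase2 (k - 1) (l - 1)) :
    g k l = g (k - 1) l + g (k - 1) ((l : ℤ) - 1) := by
  have hk0 : k ≠ 0 := by omega
  have hl0 : l ≠ 0 := by omega
  have bkρ : k.testBit (padicValNat 2 k) = true := bit_self_nu hk0
  have blμ : l.testBit (padicValNat 2 l) = true := bit_self_nu hl0
  have bk1ρ : (k - 1).testBit (padicValNat 2 k) = false := bit_pred_nu hk0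
  have bl1μ : (l - 1).testBit (padicValNat 2 l) = false := bit_pred_nu hl0
  have szρ : padicValNat 2 k < k.size := lt_size_of_testBit bkρ
  have szμ : padicValNat 2 l < l.size := lt_size_of_testBit blμ
  -- Q1 : not both
  have Q1 : ¬ (ContainsBase2 (k - 1) l ∧ ContainsBase2 (k - 1) (l - 1)) := by
    rintro ⟨hB', hD'⟩
    have hD0 := hD'
    rw [contains_iff] at hB' hD'
    obtain ⟨sB, zB⟩ := hB'
    obtain ⟨sD, zD⟩ := hD'
    have hne : padicValNat 2 l ≠ padicValNat 2 k := by
      intro e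
      have hx := sB _ blμ
      rw [e, bk1ρ] at hx
      simp at hx
    rcases lt_trichotomy (padicValNat 2 l) (padicValNat 2 k) with hlt | heq | hgt
    · rcases h with h1 | h2
      · omega
      · exact h2 hD0
    · exact hne heq
    · have hx := sD _ (bit_pred_lt hl0 hgt)
      rw [bk1ρ] at hx
      simp at hx
  -- Q2 : A iff B or D
  have Q2 : ContainsBase2 k l ↔ (ContainsBase2 (k - 1) l ∨ ContainsBase2 (k - 1) (l - 1)) := by
    constructor
    · intro hA'
      rw [contains_iff] at hA'
      obtain ⟨sA, zA⟩ := hA'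
      have hρμ : padicValNat 2 k ≤ padicValNat 2 l := by
        by_contra hc
        push_neg at hc
        have hx := sA _ blμ
        rw [bit_self_lt hk0 hc] at hx
        simp at hx
      have hk2 : k ≠ 2 ^ (padicValNat 2 k) := by
        intro e
        have : k.size = padicValNat 2 k + 1 := by
          conv_lhs => rw [e, Nat.size_pow]
        omega
      rcases eq_or_lt_of_le hρμ with heq | hgt
      · right
        rw [contains_iff]
        constructor
        · intro i hi
          rcases lt_trichotomy i (padicValNat 2 l) with h1 | h2 | h3
          · exact bit_pred_lt hk0 (by omega)
          · rw [h2, bl1μ] at hi; simp at hi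
          · rw [bit_pred_gt hl0 h3] at hi
            rw [bit_pred_gt hk0 (by omega)]
            exact sA i hi
        · calc (l - 1).size ≤ l.size := Nat.size_le_size (by omega)
            _ < (k - 1).size := by rw [size_pred_eq hk0 hk2]; exact zA
      · left
        rw [contains_iff]
        constructor
        · intro i hi
          have hiμ : padicValNat 2 l ≤ i := by
            by_contra hc
            push_neg at hc
            rw [bit_self_lt hl0 hc] at hi
            simp at hi
          rw [bit_pred_gt hk0 (by omega)]
          exact sA i hi
        · rw [size_pred_eq hk0 hk2]; exact zA
    · intro hBD
      rcases hBD with hB' | hD'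
      · have hB'' := hB'
        rw [contains_iff] at hB''
        obtain ⟨sB, zB⟩ := hB''
        have hne : padicValNat 2 l ≠ padicValNat 2 k := by
          intro e
          have hx := sB _ blμ
          rw [e, bk1ρ] at hx
          simp at hx
        have hgt : padicValNat 2 k < padicValNat 2 l := by
          rcases lt_trichotomy (padicValNat 2 l) (padicValNat 2 k) with hlt | heq | hgt
          · exfalso
            have hD2 : ContainsBase2 (k - 1) (l - 1) := by
              rw [contains_iff]
              constructor
              · intro i hi
                rcases lt_trichotomy i (padicValNat 2 l) with h1 | h2 | h3
                · exact bit_pred_lt hk0 (by omega)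
                · rw [h2, bl1μ] at hi; simp at hi
                · rw [bit_pred_gt hl0 h3] at hi
                  exact sB i hi
              · exact lt_of_le_of_lt (Nat.size_le_size (by omega)) zB
            rcases h with h1 | h2
            · omega
            · exact h2 hD2
          · exact absurd heq hne
          · exact hgt
        rw [contains_iff]
        constructor
        · intro i hi
          have hiμ : padicValNat 2 l ≤ i := by
            by_contra hc
            push_neg at hc
            rw [bit_self_lt hl0 hc] at hi
            simp at hi
          rw [← bit_pred_gt hk0 (by omega)]
          exact sB i hi
        · exact lt_of_lt_of_le zB (Nat.size_le_size (by omega))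
      · have hD0 := hD'
        rw [contains_iff] at hD'
        obtain ⟨sD, zD⟩ := hD'
        have heq : padicValNat 2 l = padicValNat 2 k := by
          rcases lt_trichotomy (padicValNat 2 l) (padicValNat 2 k) with hlt | heq | hgt
          · exfalso
            rcases h with h1 | h2
            · omega
            · exact h2 hD0
          · exact heq
          · exfalso
            have hx := sD _ (bit_pred_lt hl0 hgt)
            rw [bk1ρ] at hx
            simp at hx
        have hk2 : k ≠ 2 ^ (padicValNat 2 k) := by
          intro e
          have hsz : (k - 1).size = padicValNat 2 k := by
            conv_lhs => rw [e]
            exact size_two_pow_sub_one _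
          rw [hsz] at zD
          rcases Nat.eq_zero_or_pos (padicValNat 2 l) with hμ0 | hμp
          · omega
          · have hy : padicValNat 2 l - 1 < (l - 1).size :=
              lt_size_of_testBit (bit_pred_lt hl0 (by omega))
            omega
        rw [contains_iff]
        constructor
        · intro i hi
          have hiμ : padicValNat 2 l ≤ i := by
            by_contra hc
            push_neg at hc
            rw [bit_self_lt hl0 hc] at hi
            simp at hi
          rcases eq_or_lt_of_le hiμ with h2 | h3
          · rw [← h2, heq]; exact bkρ
          · rw [← bit_pred_gt hk0 (by omega)]
            apply sD
            rw [bit_pred_gt hl0 h3]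
            exact hi
        · by_cases hl2 : l = 2 ^ (padicValNat 2 l)
          · have hsl : l.size = padicValNat 2 l + 1 := by
              conv_lhs => rw [hl2, Nat.size_pow]
            have hsl1 : (l - 1).size = padicValNat 2 l := by
              conv_lhs => rw [hl2]
              exact size_two_pow_sub_one _
            have hkz : (k - 1).size = k.size := size_pred_eq hk0 hk2
            have hne2 : k.size ≠ padicValNat 2 l + 1 := by
              intro e
              exact hk2 (eq_pow_of_size hk0 (by rw [e, heq]))
            omega
          · rw [← size_pred_eq hl0 hl2, ← size_pred_eq hk0 hk2]
            exact zD
  -- assemble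
  have hcast : ((l : ℤ) - 1) = ((l - 1 : ℕ) : ℤ) := by
    rw [Nat.cast_sub hl]; simp
  rw [hcast]
  simp only [g, Int.toNat_natCast]
  by_cases hBc : ContainsBase2 (k - 1) l
  · have hDc : ¬ ContainsBase2 (k - 1) (l - 1) := fun hD => Q1 ⟨hBc, hD⟩
    have hAc : ContainsBase2 k l := Q2.mpr (Or.inl hBc)
    simp [hAc, hBc, hDc, Int.natCast_nonneg]
  · by_cases hDc : ContainsBase2 (k - 1) (l - 1)
    · have hAc : ContainsBase2 k l := Q2.mpr (Or.inr hDc)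
      simp [hAc, hBc, hDc, Int.natCast_nonneg]
    · have hAc : ¬ ContainsBase2 k l := by
        intro a
        rcases Q2.mp a with hx | hx
        · exact hBc hx
        · exact hDc hx
      simp [hAc, hBc, hDc]
end

section
/- Let k and ℓ be natural numbers with k ≥ 1 and ℓ ≥ 1, and suppose ν₂(ℓ) > ν₂(k). Then g(k,ℓ) = g(k−1,ℓ) and g(k−1,ℓ−1) = 0. -/
namespace Nat

theorem testBit_eq_false_of_two_pow_succ_dvd {n i : ℕ} (h : 2 ^ (i + 1) ∣ n) :
    n.testBit i = false := by
  obtain ⟨m, rfl⟩ := h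
  rw [pow_succ, mul_assoc, testBit_two_pow_mul]
  simp

theorem testBit_eq_true_of_two_pow_dvd_of_not_dvd {n i : ℕ} (h : 2 ^ i ∣ n)
    (h' : ¬ 2 ^ (i + 1) ∣ n) : n.testBit i = true := by
  obtain ⟨m, rfl⟩ := h
  have hm : m % 2 = 1 := by
    rw [pow_succ, Nat.mul_dvd_mul_iff_left (Nat.two_pow_pos i)] at h'
    omega
  simp [testBit_two_pow_mul, hm]

theorem testBit_of_not_two_pow_dvd_succ {n i : ℕ} (h : ¬ 2 ^ i ∣ n + 1) :
    n.testBit i = (n + 1).testBit i := by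
  simp only [testBit_eq_decide_div_mod_eq, succ_div_of_not_dvd h]

theorem testBit_of_two_pow_dvd_succ {n i : ℕ} (h : 2 ^ i ∣ n + 1) :
    n.testBit i = !(n + 1).testBit i := by
  simp only [testBit_eq_decide_div_mod_eq, succ_div_of_dvd h]
  rcases mod_two_eq_zero_or_one (n / 2 ^ i) with hq | hq <;> simp [hq, add_mod]

theorem and_succ_eq_and_of_dvd {k m : ℕ} (h : 2 ^ (padicValNat 2 (k + 1) + 1) ∣ m) :
    m &&& (k + 1) = m &&& k := by
  refine eq_of_testBit_eq fun i => ?_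
  simp only [testBit_and]
  rcases le_or_gt i (padicValNat 2 (k + 1)) with hi | hi
  · rw [testBit_eq_false_of_two_pow_succ_dvd ((pow_dvd_pow 2 (by omega)).trans h),
      Bool.false_and, Bool.false_and]
  · have hndvd : ¬ 2 ^ i ∣ k + 1 := fun hd =>
      pow_succ_padicValNat_not_dvd (p := 2) (by omega) ((pow_dvd_pow 2 hi).trans hd)
    rw [testBit_of_not_two_pow_dvd_succ hndvd]

end Nat

theorem containsBase2_succ_iff {k m : ℕ} (hand : m &&& (k + 1) = m &&& k)
    (hpow : ∀ j, k + 1 = 2 ^ j → 2 ^ j ≤ m) :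
    ContainsBase2 (k + 1) m ↔ ContainsBase2 k m := by
  unfold ContainsBase2
  rw [hand]
  refine and_congr_left fun _ => ⟨fun ⟨j, hmj, hjk⟩ => ⟨j, hmj, ?_⟩,
    fun ⟨j, hmj, hjk⟩ => ⟨j, hmj, by omega⟩⟩
  rcases hjk.lt_or_eq with hlt | heq
  · omega
  · exact absurd (hpow j heq.symm) (by omega)

theorem not_containsBase2_of_testBit {l m i : ℕ} (hm : m.testBit i = true)
    (hl : l.testBit i = false) : ¬ ContainsBase2 l m := by
  rintro ⟨-, hand⟩
  have hbit := congrArg (Nat.testBit · i) hand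
  simp only [Nat.testBit_and, hm, hl] at hbit
  exact Bool.false_ne_true hbit

open Classical in
theorem g_natCast (l m : ℕ) : g l m = if ContainsBase2 l m then 1 else 0 := by
  simp [g]

theorem stmt_10 (k l : ℕ) (hk : 1 ≤ k) (hl : 1 ≤ l)
    (h : padicValNat 2 l > padicValNat 2 k) :
    g k l = g (k - 1) l ∧ g (k - 1) ((l : ℤ) - 1) = 0 := by
  obtain ⟨k, rfl⟩ : ∃ k', k = k' + 1 := ⟨k - 1, by omega⟩
  obtain ⟨l, rfl⟩ : ∃ l', l = l' + 1 := ⟨l - 1, by omega⟩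
  set v := padicValNat 2 (k + 1)
  have hl_dvd : 2 ^ (v + 1) ∣ l + 1 := (padicValNat_dvd_iff_le (by omega)).2 h
  have hpow : ∀ j, k + 1 = 2 ^ j → 2 ^ j ≤ l + 1 := by
    intro j hj
    have hvj : v = j := by simp only [v, hj, padicValNat.prime_pow]
    exact Nat.le_of_dvd (by omega) ((pow_dvd_pow 2 (by omega)).trans (hvj ▸ hl_dvd))
  have hk_bit : k.testBit v = false := by
    rw [Nat.testBit_of_two_pow_dvd_succ pow_padicValNat_dvd,
      Nat.testBit_eq_true_of_two_pow_dvd_of_not_dvd pow_padicValNat_dvd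
        (pow_succ_padicValNat_not_dvd (by omega)), Bool.not_true]
  have hl_bit : l.testBit v = true := by
    rw [Nat.testBit_of_two_pow_dvd_succ ((pow_dvd_pow 2 v.le_succ).trans hl_dvd),
      Nat.testBit_eq_false_of_two_pow_succ_dvd hl_dvd, Bool.not_false]
  have hcast : ((l + 1 : ℕ) : ℤ) - 1 = l := by push_cast; ring
  refine ⟨?_, ?_⟩
  · rw [Nat.add_sub_cancel, g_natCast, g_natCast]
    classical
    exact if_congr (containsBase2_succ_iff (Nat.and_succ_eq_and_of_dvd hl_dvd) hpow) rfl rfl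
  · rw [Nat.add_sub_cancel, hcast, g_natCast, if_neg (not_containsBase2_of_testBit hl_bit hk_bit)]
end

section
/- Let k and ℓ be natural numbers with k ≥ 1 and ℓ ≥ 1, and suppose ν₂(ℓ) < ν₂(k). Then g(k,ℓ) = 0 and g(k−1,ℓ) ≤ g(k−1,ℓ−1). -/
private lemma odd_pred_testBit {u j : ℕ} (hu : u % 2 = 1) (hj : 1 ≤ j) :
    (u - 1).testBit j = u.testBit j := by
  obtain ⟨t, rfl⟩ : ∃ t, u = 2 * t + 1 := ⟨u / 2, by omega⟩
  simp only [Nat.testBit_eq_decide_div_mod_eq]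
  congr 1
  obtain ⟨j', rfl⟩ : ∃ j', j = j' + 1 := ⟨j - 1, by omega⟩
  rw [pow_succ, mul_comm (2 ^ j') 2, ← Nat.div_div_eq_div_mul, ← Nat.div_div_eq_div_mul]
  have e : (2 * t + 1 - 1) / 2 = (2 * t + 1) / 2 := by omega
  rw [e]

theorem stmt_12 (k l : ℕ) (hk : 1 ≤ k) (hl : 1 ≤ l)
    (h : padicValNat 2 l < padicValNat 2 k) :
    g k l = 0 ∧ g (k - 1) l ≤ g (k - 1) ((l : ℤ) - 1) := by
  set a := padicValNat 2 l with ha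
  -- l = 2^a * u with u odd
  obtain ⟨u, hu⟩ : 2 ^ a ∣ l := pow_padicValNat_dvd
  haveI : Fact (Nat.Prime 2) := ⟨Nat.prime_two⟩
  have hund : ¬ 2 ^ (a + 1) ∣ l := pow_succ_padicValNat_not_dvd (p := 2) (n := l) (Nat.one_le_iff_ne_zero.mp hl)
  have huodd : u % 2 = 1 := by
    rcases Nat.even_or_odd u with he | ho
    · exfalso; apply hund
      obtain ⟨w, rfl⟩ := he
      exact ⟨w, by rw [hu]; ring⟩
    · exact Nat.odd_iff.mp ho
  -- k = 2^(a+1) * v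
  obtain ⟨v, hv⟩ : 2 ^ (a + 1) ∣ k := by
    have : 2 ^ (a + 1) ∣ 2 ^ padicValNat 2 k := pow_dvd_pow 2 (by omega)
    exact this.trans pow_padicValNat_dvd
  have hu1 : 1 ≤ u := by
    rcases Nat.eq_zero_or_pos u with h0 | h0
    · subst h0; simp at hu; omega
    · exact h0
  have hv1 : 1 ≤ v := by
    rcases Nat.eq_zero_or_pos v with h0 | h0
    · subst h0; simp at hv; omega
    · exact h0
  -- testBit l a = true, testBit k a = false
  have hla : l.testBit a = true := by
    rw [Nat.testBit_eq_decide_div_mod_eq]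
    have hdiv : l / 2 ^ a = u := by
      rw [hu, Nat.mul_div_cancel_left _ (Nat.two_pow_pos a)]
    rw [hdiv]; simp; omega
  have hka : k.testBit a = false := by
    rw [Nat.testBit_eq_decide_div_mod_eq]
    have hdk : k / 2 ^ a = 2 * v := by
      rw [hv, show (2:ℕ) ^ (a + 1) * v = 2 ^ a * (2 * v) by ring,
        Nat.mul_div_cancel_left _ (Nat.two_pow_pos a)]
    rw [hdk]; simp
  constructor
  · -- g k l = 0
    rw [g, if_neg]
    rintro ⟨-, -, hand⟩
    have : (↑l : ℤ).toNat = l := by simp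
    rw [this] at hand
    have := congrArg (Nat.testBit · a) hand
    simp only [Nat.testBit_and, hla, hka] at this
    simp at this
  · -- monotonicity
    rw [g, g]
    split_ifs with h1 h2
    · norm_num
    · exfalso
      apply h2
      obtain ⟨-, ⟨j, hjl, hjk⟩, hand⟩ := h1
      have htl : (↑l : ℤ).toNat = l := by simp
      rw [htl] at hjl hand
      have htl1 : ((↑l : ℤ) - 1).toNat = l - 1 := by omega
      refine ⟨by omega, ⟨j, ?_, hjk⟩, ?_⟩
      · rw [htl1]; omega
      rw [htl1]
      -- key: (l-1) &&& (k-1) = l-1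
      have key : ∀ i, (l - 1).testBit i = true → (k - 1).testBit i = true := by
        intro i hi
        have hl1 : l - 1 = 2 ^ a * (u - 1) + (2 ^ a - 1) := by
          have h2a := Nat.two_pow_pos a
          have hmul : 2 ^ a * (u - 1) = 2 ^ a * u - 2 ^ a := Nat.mul_pred _ _
          have hle : 2 ^ a ≤ 2 ^ a * u := Nat.le_mul_of_pos_right _ hu1
          omega
        have hk1 : k - 1 = 2 ^ (a + 1) * (v - 1) + (2 ^ (a + 1) - 1) := by
          have h2a := Nat.two_pow_pos (a + 1)
          have hmul : 2 ^ (a + 1) * (v - 1) = 2 ^ (a + 1) * v - 2 ^ (a + 1) := Nat.mul_pred _ _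
          have hle : 2 ^ (a + 1) ≤ 2 ^ (a + 1) * v := Nat.le_mul_of_pos_right _ hv1
          omega
        rcases lt_trichotomy i a with hia | hia | hia
        · rw [hk1, Nat.testBit_two_pow_mul_add _ (by have := Nat.two_pow_pos (a+1); omega)]
          simp [Nat.lt_succ_of_lt hia, hia]
        · exfalso
          rw [hl1, Nat.testBit_two_pow_mul_add _ (by have := Nat.two_pow_pos a; omega), hia] at hi
          simp only [lt_irrefl, if_false, Nat.sub_self] at hi
          rw [Nat.testBit_eq_decide_div_mod_eq] at hi
          simp at hi
          omega
        · -- i > a : testBit (l-1) i = testBit l i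
          have hli : l.testBit i = true := by
            have e1 : (l - 1).testBit i = (u - 1).testBit (i - a) := by
              rw [hl1, Nat.testBit_two_pow_mul_add _ (by have := Nat.two_pow_pos a; omega)]
              simp [Nat.not_lt_of_le (le_of_lt hia)]
            have e2 : l.testBit i = u.testBit (i - a) := by
              have : l = 2 ^ a * u + 0 := by omega
              rw [this, Nat.testBit_two_pow_mul_add _ (Nat.two_pow_pos a)]
              simp [Nat.not_lt_of_le (le_of_lt hia)]
            rw [e2, ← odd_pred_testBit huodd (by omega), ← e1, hi]
          have := congrArg (Nat.testBit · i) hand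
          simp only [Nat.testBit_and, hli] at this
          simpa using this.symm
      apply Nat.eq_of_testBit_eq
      intro i
      rw [Nat.testBit_and]
      cases hcase : (l - 1).testBit i
      · simp
      · simp [key i hcase]
    · norm_num
    · norm_num
end

section
/- Let h be a natural number with h = 2 or h odd and h ≥ 3, let k ≥ 1, and set N = h·2^k. Then 2^{d(N−2)+1} = 2^{d(N)} + ∑_{i=1}^{k−1} 2^{d(N−2^{i+1})+1}; here every exponent d(N−2)+1, d(N), and d(N−2^{i+1})+1 (for 1 ≤ i ≤ k−1) is a non-negative integer, so all powers of 2 are natural numbers. -/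
/-!
Write `F = logDigitSum`, so `F m = ⌊log₂ m⌋ + s₂(m) = d m + 3`. Appending a binary digit gives
`F (2m) = F m + 1` and `F (2m + 1) = F m + 2`. Since `N - 2^(i+1) = 2^(i+1) (h 2^(k-i-1) - 1)` and
the binary expansion of `h 2^t - 1` is that of `h - 1` followed by `t` ones,
`F (N - 2^(i+1)) = F (h - 1) + 2k - i - 1` for `0 ≤ i < k`. The hypothesis on `h` is what makes
`F (h - 1) + 1 = F h`, so with `E = F h - 2` the exponents are `E + 2(k-1)` on the left and
`E + (k-1)` and `E + 2(k-1) - i` on the right, and the identity is a geometric sum.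
-/

/-- For `m ≥ 1` with 2-adic expansion `m = 2^{a₁} + … + 2^{a_k}` (`a₁ > … > a_k ≥ 0`),
`d m = a₁ + k - 3 = ⌊log₂ m⌋ + s₂(m) - 3`, where `s₂(m)` is the number of ones in the
binary expansion of `m`. -/
def d (m : ℕ) : ℤ :=
  (Nat.log 2 m : ℤ) + ((Nat.digits 2 m).sum : ℤ) - 3

open Finset

def logDigitSum (m : ℕ) : ℕ := Nat.log 2 m + (Nat.digits 2 m).sum

lemma d_eq_logDigitSum_sub_three (m : ℕ) : d m = (logDigitSum m : ℤ) - 3 := by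
  simp only [d, logDigitSum, Nat.cast_add]

lemma two_le_logDigitSum {m : ℕ} (hm : 2 ≤ m) : 2 ≤ logDigitSum m := by
  have hlog : 0 < Nat.log 2 m := Nat.log_pos one_lt_two hm
  have hsum : (Nat.digits 2 m).sum ≠ 0 := fun h0 =>
    Nat.getLast_digit_ne_zero 2 (by omega) ((List.sum_eq_zero_iff.mp h0) _ (List.getLast_mem _))
  unfold logDigitSum
  omega

lemma logDigitSum_two_mul {m : ℕ} (hm : m ≠ 0) : logDigitSum (2 * m) = logDigitSum m + 1 := by
  rw [logDigitSum, Nat.digits_def' one_lt_two (by omega), Nat.mul_mod_right,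
    Nat.mul_div_cancel_left m two_pos, mul_comm, Nat.log_mul_base one_lt_two hm, List.sum_cons,
    logDigitSum]
  ring

lemma logDigitSum_two_mul_add_one {m : ℕ} (hm : m ≠ 0) :
    logDigitSum (2 * m + 1) = logDigitSum m + 2 := by
  have hlog : Nat.log 2 (2 * m + 1) = Nat.log 2 m + 1 := by
    refine Nat.log_eq_of_pow_le_of_lt_pow ?_ ?_
    · have := Nat.pow_log_le_self 2 hm
      rw [pow_succ]; omega
    · have := Nat.lt_pow_succ_log_self one_lt_two m
      rw [pow_succ, pow_succ]; omega
  rw [logDigitSum, Nat.digits_def' one_lt_two (by omega), hlog, show (2 * m + 1) % 2 = 1 by omega,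
    show (2 * m + 1) / 2 = m by omega, List.sum_cons, logDigitSum]
  ring

lemma logDigitSum_two_pow_mul {m : ℕ} (hm : m ≠ 0) (a : ℕ) :
    logDigitSum (2 ^ a * m) = logDigitSum m + a := by
  induction a with
  | zero => simp
  | succ a ih =>
    rw [pow_succ', mul_assoc, logDigitSum_two_mul (by positivity), ih, add_assoc]

lemma logDigitSum_mul_two_pow_sub_one {m : ℕ} (hm : 2 ≤ m) (t : ℕ) :
    logDigitSum (m * 2 ^ t - 1) = logDigitSum (m - 1) + 2 * t := by
  induction t with
  | zero => simp
  | succ t ih =>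
    have hpos : 2 ≤ m * 2 ^ t := le_mul_of_le_of_one_le hm Nat.one_le_two_pow
    have hsplit : m * 2 ^ (t + 1) - 1 = 2 * (m * 2 ^ t - 1) + 1 := by
      rw [pow_succ, ← mul_assoc]; omega
    rw [hsplit, logDigitSum_two_mul_add_one (by omega), ih]
    ring

lemma logDigitSum_mul_two_pow_sub_two_pow {m n i : ℕ} (hm : 2 ≤ m) (hi : i ≤ n) :
    logDigitSum (m * 2 ^ n - 2 ^ i) + i = logDigitSum (m - 1) + 2 * n := by
  have hfactor : m * 2 ^ n - 2 ^ i = 2 ^ i * (m * 2 ^ (n - i) - 1) := by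
    rw [Nat.mul_sub, mul_one, mul_left_comm, ← pow_add, Nat.add_sub_cancel' hi]
  have hne : m * 2 ^ (n - i) - 1 ≠ 0 := by
    have := le_mul_of_le_of_one_le hm (Nat.one_le_two_pow (n := n - i))
    omega
  rw [hfactor, logDigitSum_two_pow_mul hne, logDigitSum_mul_two_pow_sub_one hm]
  omega

lemma logDigitSum_sub_one_add_one {h : ℕ} (hh : h = 2 ∨ (Odd h ∧ 3 ≤ h)) :
    logDigitSum (h - 1) + 1 = logDigitSum h := by
  rcases hh with rfl | ⟨⟨j, rfl⟩, h3⟩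
  · exact (logDigitSum_two_mul one_ne_zero).symm
  · rw [Nat.add_sub_cancel, logDigitSum_two_mul (by omega), logDigitSum_two_mul_add_one (by omega)]

lemma two_pow_add_eq_add_sum (a n : ℕ) :
    2 ^ (a + n) = 2 ^ a + ∑ j ∈ range n, 2 ^ (a + j) := by
  induction n with
  | zero => simp
  | succ n ih =>
    rw [sum_range_succ, ← add_assoc (2 ^ a), ← ih]
    ring

lemma two_pow_add_two_mul_eq_add_sum (E K : ℕ) :
    2 ^ (E + 2 * K) = 2 ^ (E + K) + ∑ i ∈ Icc 1 K, 2 ^ (E + K + (K - i)) := by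
  have hreflect : ∑ i ∈ Icc 1 K, 2 ^ (E + K + (K - i)) = ∑ j ∈ range K, 2 ^ (E + K + j) :=
    sum_nbij' (K - ·) (K - ·) (by simp; omega) (by simp; omega) (by simp; omega)
      (by simp; omega) (fun _ _ => rfl)
  rw [hreflect, ← two_pow_add_eq_add_sum, two_mul, add_assoc]

theorem stmt_16 (h k : ℕ) (hh : h = 2 ∨ (Odd h ∧ 3 ≤ h)) (hk : 1 ≤ k) :
    0 ≤ d (h * 2 ^ k - 2) + 1 ∧ 0 ≤ d (h * 2 ^ k) ∧
    (∀ i, 1 ≤ i → i ≤ k - 1 → 0 ≤ d (h * 2 ^ k - 2 ^ (i + 1)) + 1) ∧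
    2 ^ (d (h * 2 ^ k - 2) + 1).toNat
      = 2 ^ (d (h * 2 ^ k)).toNat
        + ∑ i ∈ Finset.Icc 1 (k - 1), 2 ^ (d (h * 2 ^ k - 2 ^ (i + 1)) + 1).toNat := by
  obtain ⟨K, rfl⟩ : ∃ K, k = K + 1 := ⟨k - 1, by omega⟩
  have h2 : 2 ≤ h := by rcases hh with rfl | ⟨-, h3⟩ <;> omega
  have hc := two_le_logDigitSum h2
  have hpred := logDigitSum_sub_one_add_one hh
  have hN : logDigitSum (h * 2 ^ (K + 1)) = logDigitSum h + (K + 1) := by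
    rw [mul_comm, logDigitSum_two_pow_mul (by omega)]
  have hNsub (i : ℕ) (hi : i ≤ K) :
      logDigitSum (h * 2 ^ (K + 1) - 2 ^ (i + 1)) + i = logDigitSum h + 2 * K := by
    have := logDigitSum_mul_two_pow_sub_two_pow h2 (by omega : i + 1 ≤ K + 1)
    omega
  have hNtwo : logDigitSum (h * 2 ^ (K + 1) - 2) = logDigitSum h + 2 * K := by
    simpa using hNsub 0 K.zero_le
  simp only [d_eq_logDigitSum_sub_three, Nat.add_sub_cancel]
  refine ⟨by omega, by omega, fun i _ hi => by have := hNsub i hi; omega, ?_⟩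
  have hlhs : (logDigitSum (h * 2 ^ (K + 1) - 2) - 3 + 1 : ℤ).toNat
      = logDigitSum h - 2 + 2 * K := by omega
  have hfirst : (logDigitSum (h * 2 ^ (K + 1)) - 3 : ℤ).toNat = logDigitSum h - 2 + K := by omega
  have hterm (i : ℕ) (hi : i ∈ Icc 1 K) :
      (logDigitSum (h * 2 ^ (K + 1) - 2 ^ (i + 1)) - 3 + 1 : ℤ).toNat
        = logDigitSum h - 2 + K + (K - i) := by
    obtain ⟨-, hiK⟩ := mem_Icc.mp hi
    have := hNsub i hiK
    omega
  rw [hlhs, hfirst, sum_congr rfl fun i hi => congrArg (2 ^ ·) (hterm i hi)]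
  exact two_pow_add_two_mul_eq_add_sum _ _
end
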